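/- arXiv:2603.18944 — 4 statements merged into one kernel-verified Lean document; each statement's English description precedes it below -/
import Mathlib

section
/- Abstract criterion for non-asymptotic uniform-in-time error bounds (Theorem 2.2, random-semiflow form). Let (Ω,𝓕,μ) be a probability space, (E,‖·‖) a real normed vector space, and let ‖·‖' be a second norm on E with ‖x‖ ≤ ‖x‖' for all x ∈ E. Let N be a positive integer, τ = 1/N, let u be a random semiflow, v a discrete flow with step τ, M a map from random states to [0,∞), and X₀ a random state. Assume: (A1) there exist constants C ≥ 0 and λ > 0 such that for all random states X, Y and all t ≥ 0, for μ-almost every ω, ‖(u_t X)(ω) − (u_t Y)(ω)‖ ≤ C·e^{−λt}·‖X(ω) − Y(ω)‖'; (A2) there exists C̃ ≥ 0 such that for every random state X and every natural number ℓ ≤ N, E[‖(u_{ℓτ} X) − (v_ℓ X)‖'] ≤ C̃·M(X); (A3) there exists Ĉ ≥ 0 such that M(v_ℓ X₀) ≤ Ĉ for every ℓ ∈ ℕ. Then for every ℓ ∈ ℕ, E[‖(u_{ℓτ} X₀) − (v_ℓ X₀)‖] ≤ C̃·Ĉ·(1 + C/(1 − e^{−λ})). -/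
open MeasureTheory Filter

set_option maxHeartbeats 1000000

/-- Abstract criterion for non-asymptotic uniform-in-time error bounds
(Theorem 2.2, random-semiflow form). -/
theorem uniform_in_time_error_bound_general
    {Ω : Type*} [MeasurableSpace Ω] (μ : Measure Ω) [IsProbabilityMeasure μ]
    {E : Type*} [NormedAddCommGroup E] [NormedSpace ℝ E]
    -- the second norm ‖·‖' on E
    (N' : E → ℝ)
    (hN'_nonneg : ∀ x, 0 ≤ N' x)
    (hN'_def : ∀ x, N' x = 0 ↔ x = 0)
    (hN'_add : ∀ x y, N' (x + y) ≤ N' x + N' y)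
    (hN'_smul : ∀ (c : ℝ) (x : E), N' (c • x) = |c| * N' x)
    (hle : ∀ x, ‖x‖ ≤ N' x)
    -- time step
    (N : ℕ) (hN : 0 < N) (τ : ℝ) (hτ : τ = 1 / N)
    -- random semiflow u
    (u : ℝ → (Ω → E) → (Ω → E))
    (hu_meas : ∀ t, 0 ≤ t → ∀ X : Ω → E, StronglyMeasurable X → StronglyMeasurable (u t X))
    (hu_zero : ∀ X : Ω → E, StronglyMeasurable X → u 0 X = X)
    (hu_comp : ∀ s t : ℝ, 0 ≤ s → 0 ≤ t → ∀ X : Ω → E, StronglyMeasurable X →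
      u (t + s) X = u t (u s X))
    -- discrete flow v with step τ
    (v : ℕ → (Ω → E) → (Ω → E))
    (hv_meas : ∀ n, ∀ X : Ω → E, StronglyMeasurable X → StronglyMeasurable (v n X))
    (hv_zero : ∀ X : Ω → E, StronglyMeasurable X → v 0 X = X)
    (hv_comp : ∀ n m : ℕ, ∀ X : Ω → E, StronglyMeasurable X → v (n + m) X = v n (v m X))
    -- the moment functional M with values in [0,∞)
    (M : (Ω → E) → ℝ) (hM : ∀ X, 0 ≤ M X)
    -- initial random state
    (X₀ : Ω → E) (hX₀ : StronglyMeasurable X₀)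
    -- (A1) contractivity of the dynamics
    (C lam : ℝ) (hC : 0 ≤ C) (hlam : 0 < lam)
    (hA1 : ∀ X Y : Ω → E, StronglyMeasurable X → StronglyMeasurable Y → ∀ t : ℝ, 0 ≤ t →
      ∀ᵐ ω ∂μ, ‖u t X ω - u t Y ω‖ ≤ C * Real.exp (-lam * t) * N' (X ω - Y ω))
    -- (A2) finite time error bound
    (Ct : ℝ) (hCt : 0 ≤ Ct)
    (hA2 : ∀ X : Ω → E, StronglyMeasurable X → ∀ ℓ : ℕ, ℓ ≤ N →
      ∫⁻ ω, ENNReal.ofReal (N' (u ((ℓ : ℝ) * τ) X ω - v ℓ X ω)) ∂μ ≤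
        ENNReal.ofReal (Ct * M X))
    -- (A3) uniform in time control on the numerical scheme
    (Ch : ℝ) (hCh : 0 ≤ Ch)
    (hA3 : ∀ ℓ : ℕ, M (v ℓ X₀) ≤ Ch) :
    ∀ ℓ : ℕ,
      ∫⁻ ω, ENNReal.ofReal ‖u ((ℓ : ℝ) * τ) X₀ ω - v ℓ X₀ ω‖ ∂μ ≤
        ENNReal.ofReal (Ct * Ch * (1 + C / (1 - Real.exp (-lam)))) := by

  have hNpos : (0:ℝ) < (N:ℝ) := by exact_mod_cast hN
  have hτpos : 0 < τ := by rw [hτ]; positivity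
  set r := Real.exp (-lam) with hrdef
  have hr0 : 0 < r := Real.exp_pos _
  have hr1 : r < 1 := by
    rw [hrdef, show (1:ℝ) = Real.exp 0 from Real.exp_zero.symm]
    exact Real.exp_lt_exp.mpr (by linarith)
  have key : ∀ k : ℕ, ∀ Y : Ω → E, StronglyMeasurable Y →
      (∀ j : ℕ, M (v j Y) ≤ Ch) → ∀ ℓ : ℕ, ℓ ≤ (k+1)*N →
      ∫⁻ ω, ENNReal.ofReal ‖u ((ℓ : ℝ) * τ) Y ω - v ℓ Y ω‖ ∂μ ≤
        ENNReal.ofReal (Ct * Ch * (1 + C * ∑ m ∈ Finset.range k, r ^ m)) := by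
    intro k
    induction k with
    | zero =>
      intro Y hY hY3 ℓ hℓ
      simp only [Finset.range_zero, Finset.sum_empty, mul_zero, add_zero, mul_one]
      have hMY : M Y ≤ Ch := by have := hY3 0; rwa [hv_zero Y hY] at this
      calc ∫⁻ ω, ENNReal.ofReal ‖u ((ℓ : ℝ) * τ) Y ω - v ℓ Y ω‖ ∂μ
          ≤ ∫⁻ ω, ENNReal.ofReal (N' (u ((ℓ : ℝ) * τ) Y ω - v ℓ Y ω)) ∂μ :=
            lintegral_mono fun ω => ENNReal.ofReal_le_ofReal (hle _)
        _ ≤ ENNReal.ofReal (Ct * M Y) := hA2 Y hY ℓ (by omega)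
        _ ≤ ENNReal.ofReal (Ct * Ch) := ENNReal.ofReal_le_ofReal (by nlinarith)
    | succ k ih =>
      intro Y hY hY3 ℓ hℓ
      by_cases hc : ℓ ≤ (k+1)*N
      · refine (ih Y hY hY3 ℓ hc).trans (ENNReal.ofReal_le_ofReal ?_)
        have hS : (∑ m ∈ Finset.range k, r ^ m) ≤ ∑ m ∈ Finset.range (k+1), r ^ m := by
          rw [Finset.sum_range_succ]
          nlinarith [pow_nonneg hr0.le k]
        nlinarith [mul_le_mul_of_nonneg_left hS (mul_nonneg (mul_nonneg hCt hCh) hC)]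
      · push_neg at hc
        have hN1 : N ≤ (k+1)*N := Nat.le_mul_of_pos_left N (Nat.succ_pos k)
        have hNℓ : N < ℓ := lt_of_le_of_lt hN1 hc
        set p := ℓ - N with hp
        have hpN : ℓ = p + N := by omega
        have hc2 : k*N + N < ℓ := by rw [show k*N+N = (k+1)*N by ring]; exact hc
        have hpk : k*N < p := by
          have h4 : k*N + N < p + N := by rw [← hpN]; exact hc2
          omega
        have hpk2 : p ≤ (k+1)*N := by
          have h3 : p + N ≤ (k+1)*N + N := by
            rw [← hpN, show (k+1)*N + N = (k+2)*N by ring]; exact hℓ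
          omega
        have hNτ0 : (0:ℝ) ≤ (N:ℝ)*τ := by positivity
        have hpτ0 : (0:ℝ) ≤ (p:ℝ)*τ := by positivity
        have hYN : StronglyMeasurable (v N Y) := hv_meas N Y hY
        have huN : StronglyMeasurable (u ((N:ℝ)*τ) Y) := hu_meas _ hNτ0 Y hY
        have hdecomp : ∀ ω, u ((ℓ : ℝ) * τ) Y ω - v ℓ Y ω =
            (u ((p:ℝ)*τ) (u ((N:ℝ)*τ) Y) ω - u ((p:ℝ)*τ) (v N Y) ω)
            + (u ((p:ℝ)*τ) (v N Y) ω - v p (v N Y) ω) := by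
          intro ω
          have h1 : u ((ℓ : ℝ) * τ) Y = u ((p:ℝ)*τ) (u ((N:ℝ)*τ) Y) := by
            rw [show ((ℓ : ℝ) * τ) = (p:ℝ)*τ + (N:ℝ)*τ by rw [hpN]; push_cast; ring]
            exact hu_comp _ _ hNτ0 hpτ0 Y hY
          have h2 : v ℓ Y = v p (v N Y) := by rw [hpN]; exact hv_comp p N Y hY
          rw [h1, h2]; abel
        set c := C * Real.exp (-lam * ((p:ℝ)*τ)) with hcdef
        have hc0 : (0:ℝ) ≤ c := by positivity
        have hAsm : StronglyMeasurable
            (fun ω => u ((p:ℝ)*τ) (u ((N:ℝ)*τ) Y) ω - u ((p:ℝ)*τ) (v N Y) ω) :=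
          (hu_meas _ hpτ0 _ huN).sub (hu_meas _ hpτ0 _ hYN)
        have hMY : M Y ≤ Ch := by have := hY3 0; rwa [hv_zero Y hY] at this
        have hIA : ∫⁻ ω, ENNReal.ofReal ‖u ((p:ℝ)*τ) (u ((N:ℝ)*τ) Y) ω
              - u ((p:ℝ)*τ) (v N Y) ω‖ ∂μ ≤ ENNReal.ofReal (c * (Ct * Ch)) := by
          have hae := hA1 _ _ huN hYN ((p:ℝ)*τ) hpτ0
          calc ∫⁻ ω, ENNReal.ofReal ‖u ((p:ℝ)*τ) (u ((N:ℝ)*τ) Y) ω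
                - u ((p:ℝ)*τ) (v N Y) ω‖ ∂μ
              ≤ ∫⁻ ω, ENNReal.ofReal c
                  * ENNReal.ofReal (N' (u ((N:ℝ)*τ) Y ω - v N Y ω)) ∂μ := by
                refine lintegral_mono_ae (hae.mono fun ω h => ?_)
                rw [← ENNReal.ofReal_mul hc0]
                exact ENNReal.ofReal_le_ofReal h
            _ = ENNReal.ofReal c
                  * ∫⁻ ω, ENNReal.ofReal (N' (u ((N:ℝ)*τ) Y ω - v N Y ω)) ∂μ :=
                lintegral_const_mul' _ _ ENNReal.ofReal_ne_top
            _ ≤ ENNReal.ofReal c * ENNReal.ofReal (Ct * M Y) := by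
                gcongr
                exact hA2 Y hY N le_rfl
            _ ≤ ENNReal.ofReal (c * (Ct * Ch)) := by
                rw [← ENNReal.ofReal_mul hc0]
                exact ENNReal.ofReal_le_ofReal
                  (mul_le_mul_of_nonneg_left
                    (mul_le_mul_of_nonneg_left hMY hCt) hc0)
        have hIB : ∫⁻ ω, ENNReal.ofReal ‖u ((p:ℝ)*τ) (v N Y) ω - v p (v N Y) ω‖ ∂μ ≤
            ENNReal.ofReal (Ct * Ch * (1 + C * ∑ m ∈ Finset.range k, r ^ m)) :=
          ih (v N Y) hYN (fun j => by rw [← hv_comp j N Y hY]; exact hY3 (j+N)) p hpk2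
        have hexp : Real.exp (-lam * ((p:ℝ)*τ)) ≤ r ^ k := by
          rw [hrdef, ← Real.exp_nat_mul]
          apply Real.exp_le_exp.2
          have hkp : (k:ℝ) ≤ (p:ℝ)*τ := by
            rw [hτ, mul_one_div, le_div_iff₀ hNpos]
            exact_mod_cast hpk.le
          nlinarith
        have hSnn : (0:ℝ) ≤ ∑ m ∈ Finset.range k, r ^ m :=
          Finset.sum_nonneg fun m _ => pow_nonneg hr0.le m
        calc ∫⁻ ω, ENNReal.ofReal ‖u ((ℓ : ℝ) * τ) Y ω - v ℓ Y ω‖ ∂μ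
            ≤ ∫⁻ ω, (ENNReal.ofReal ‖u ((p:ℝ)*τ) (u ((N:ℝ)*τ) Y) ω
                  - u ((p:ℝ)*τ) (v N Y) ω‖
                + ENNReal.ofReal ‖u ((p:ℝ)*τ) (v N Y) ω - v p (v N Y) ω‖) ∂μ := by
              refine lintegral_mono fun ω => ?_
              rw [hdecomp ω]
              exact le_trans (ENNReal.ofReal_le_ofReal (norm_add_le _ _))
                ENNReal.ofReal_add_le
          _ = (∫⁻ ω, ENNReal.ofReal ‖u ((p:ℝ)*τ) (u ((N:ℝ)*τ) Y) ω
                  - u ((p:ℝ)*τ) (v N Y) ω‖ ∂μ)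
              + ∫⁻ ω, ENNReal.ofReal ‖u ((p:ℝ)*τ) (v N Y) ω - v p (v N Y) ω‖ ∂μ :=
              lintegral_add_left hAsm.norm.measurable.ennreal_ofReal _
          _ ≤ ENNReal.ofReal (c * (Ct * Ch))
              + ENNReal.ofReal (Ct * Ch * (1 + C * ∑ m ∈ Finset.range k, r ^ m)) :=
              add_le_add hIA hIB
          _ ≤ ENNReal.ofReal (Ct * Ch * (1 + C * ∑ m ∈ Finset.range (k+1), r ^ m)) := by
              have hkey : c * (Ct * Ch) ≤ Ct * Ch * (C * r ^ k) := by
                rw [hcdef]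
                nlinarith [mul_le_mul_of_nonneg_left hexp
                  (mul_nonneg (mul_nonneg hCt hCh) hC)]
              have hc0' : (0:ℝ) ≤ c * (Ct * Ch) :=
                mul_nonneg hc0 (mul_nonneg hCt hCh)
              have hnn2 : (0:ℝ) ≤ Ct * Ch * (1 + C * ∑ m ∈ Finset.range k, r ^ m) :=
                mul_nonneg (mul_nonneg hCt hCh)
                  (by nlinarith [mul_nonneg hC hSnn])
              rw [← ENNReal.ofReal_add hc0' hnn2]
              apply ENNReal.ofReal_le_ofReal
              rw [Finset.sum_range_succ]
              nlinarith [hkey]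
  intro ℓ
  have hℓ' : ℓ ≤ (ℓ+1)*N := le_trans (Nat.le_succ ℓ) (Nat.le_mul_of_pos_right _ hN)
  refine (key ℓ X₀ hX₀ hA3 ℓ hℓ').trans (ENNReal.ofReal_le_ofReal ?_)
  have hS : (∑ m ∈ Finset.range ℓ, r ^ m) ≤ 1 / (1 - r) := by
    rw [le_div_iff₀ (by linarith)]
    have hg := geom_sum_mul r ℓ
    nlinarith [pow_nonneg hr0.le ℓ]
  have hdiv : C / (1 - r) = C * (1 / (1-r)) := by ring
  rw [hdiv]
  nlinarith [mul_le_mul_of_nonneg_left hS (mul_nonneg (mul_nonneg hCt hCh) hC)]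
end

section
/- Abstract criterion for non-asymptotic uniform-in-time error bounds with moment control in a stronger norm (Theorem 2.1, random-semiflow form). Let (Ω,𝓕,μ) be a probability space, (E,‖·‖) a real normed vector space, and N₁ : E → [0,∞) a second norm on E. Let N be a positive integer, τ = 1/N, let u be a random semiflow, v a discrete flow with step τ, β > 0, and X₀ a random state. Assume: (H1) there exist constants C ≥ 0 and λ > 0 such that for all random states X, Y and all t ≥ 0, for μ-almost every ω, ‖(u_t X)(ω) − (u_t Y)(ω)‖ ≤ C·e^{−λt}·‖X(ω) − Y(ω)‖; (H2) there exists C̃ ≥ 0 such that for every random state X and every natural number ℓ ≤ N, E[‖(u_{ℓτ} X) − (v_ℓ X)‖] ≤ C̃·E[N₁(X(·))^β]; (H3) there exists Ĉ ≥ 0 such that E[N₁((v_ℓ X₀)(·))^β] ≤ Ĉ for every ℓ ∈ ℕ. Then for every ℓ ∈ ℕ, E[‖(u_{ℓτ} X₀) − (v_ℓ X₀)‖] ≤ C̃·Ĉ·(1 + C/(1 − e^{−λ})). -/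
open MeasureTheory Filter

/-- Abstract criterion for non-asymptotic uniform-in-time error bounds with
moment control in a stronger norm (Theorem 2.1, random-semiflow form). -/
theorem uniform_in_time_error_bound
    {Ω : Type*} [MeasurableSpace Ω] (μ : Measure Ω) [IsProbabilityMeasure μ]
    {E : Type*} [NormedAddCommGroup E] [NormedSpace ℝ E]
    -- the second norm N₁ : E → [0,∞) on E
    (N₁ : E → ℝ)
    (hN₁_nonneg : ∀ x, 0 ≤ N₁ x)
    (hN₁_def : ∀ x, N₁ x = 0 ↔ x = 0)
    (hN₁_add : ∀ x y, N₁ (x + y) ≤ N₁ x + N₁ y)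
    (hN₁_smul : ∀ (c : ℝ) (x : E), N₁ (c • x) = |c| * N₁ x)
    -- time step
    (N : ℕ) (hN : 0 < N) (τ : ℝ) (hτ : τ = 1 / N)
    -- random semiflow u
    (u : ℝ → (Ω → E) → (Ω → E))
    (hu_meas : ∀ t, 0 ≤ t → ∀ X : Ω → E, StronglyMeasurable X → StronglyMeasurable (u t X))
    (hu_zero : ∀ X : Ω → E, StronglyMeasurable X → u 0 X = X)
    (hu_comp : ∀ s t : ℝ, 0 ≤ s → 0 ≤ t → ∀ X : Ω → E, StronglyMeasurable X →
      u (t + s) X = u t (u s X))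
    -- discrete flow v with step τ
    (v : ℕ → (Ω → E) → (Ω → E))
    (hv_meas : ∀ n, ∀ X : Ω → E, StronglyMeasurable X → StronglyMeasurable (v n X))
    (hv_zero : ∀ X : Ω → E, StronglyMeasurable X → v 0 X = X)
    (hv_comp : ∀ n m : ℕ, ∀ X : Ω → E, StronglyMeasurable X → v (n + m) X = v n (v m X))
    -- the moment exponent
    (β : ℝ) (hβ : 0 < β)
    -- initial random state
    (X₀ : Ω → E) (hX₀ : StronglyMeasurable X₀)
    -- (H1) contractivity of the dynamics
    (C lam : ℝ) (hC : 0 ≤ C) (hlam : 0 < lam)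
    (hH1 : ∀ X Y : Ω → E, StronglyMeasurable X → StronglyMeasurable Y → ∀ t : ℝ, 0 ≤ t →
      ∀ᵐ ω ∂μ, ‖u t X ω - u t Y ω‖ ≤ C * Real.exp (-lam * t) * ‖X ω - Y ω‖)
    -- (H2) finite time error bound
    (Ct : ℝ) (hCt : 0 ≤ Ct)
    (hH2 : ∀ X : Ω → E, StronglyMeasurable X → ∀ ℓ : ℕ, ℓ ≤ N →
      ∫⁻ ω, ENNReal.ofReal ‖u ((ℓ : ℝ) * τ) X ω - v ℓ X ω‖ ∂μ ≤
        ENNReal.ofReal Ct * ∫⁻ ω, ENNReal.ofReal (N₁ (X ω) ^ β) ∂μ)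
    -- (H3) uniform in time moment bound on the numerical scheme
    (Ch : ℝ) (hCh : 0 ≤ Ch)
    (hH3 : ∀ ℓ : ℕ, ∫⁻ ω, ENNReal.ofReal (N₁ (v ℓ X₀ ω) ^ β) ∂μ ≤ ENNReal.ofReal Ch) :
    ∀ ℓ : ℕ,
      ∫⁻ ω, ENNReal.ofReal ‖u ((ℓ : ℝ) * τ) X₀ ω - v ℓ X₀ ω‖ ∂μ ≤
        ENNReal.ofReal (Ct * Ch * (1 + C / (1 - Real.exp (-lam)))) := by
  have hNR : (0:ℝ) < N := Nat.cast_pos.mpr hN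
  have hτpos : 0 < τ := by rw [hτ]; positivity
  have hτ0 : 0 ≤ τ := hτpos.le
  have tnn : ∀ n : ℕ, 0 ≤ (n : ℝ) * τ := fun n => mul_nonneg (Nat.cast_nonneg n) hτ0
  have hCtCh : 0 ≤ Ct * Ch := mul_nonneg hCt hCh
  have hr0 : 0 < Real.exp (-lam) := Real.exp_pos _
  have hr1 : Real.exp (-lam) < 1 := by
    calc Real.exp (-lam) < Real.exp 0 := Real.exp_lt_exp.mpr (by linarith)
    _ = 1 := Real.exp_zero
  have hbase : ∀ (j δ : ℕ), δ ≤ N →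
      ∫⁻ ω, ENNReal.ofReal ‖u ((δ : ℝ) * τ) (v j X₀) ω - v δ (v j X₀) ω‖ ∂μ ≤
        ENNReal.ofReal (Ct * Ch) := by
    intro j δ hδ
    calc ∫⁻ ω, ENNReal.ofReal ‖u ((δ : ℝ) * τ) (v j X₀) ω - v δ (v j X₀) ω‖ ∂μ
        ≤ ENNReal.ofReal Ct * ∫⁻ ω, ENNReal.ofReal (N₁ (v j X₀ ω) ^ β) ∂μ :=
          hH2 (v j X₀) (hv_meas j X₀ hX₀) δ hδ
      _ ≤ ENNReal.ofReal Ct * ENNReal.ofReal Ch := by gcongr; exact hH3 j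
      _ = ENNReal.ofReal (Ct * Ch) := (ENNReal.ofReal_mul hCt).symm
  have key : ∀ k δ j : ℕ, δ ≤ N →
      ∫⁻ ω, ENNReal.ofReal ‖u ((↑(k * N + δ) : ℝ) * τ) (v j X₀) ω -
          v (k * N + δ) (v j X₀) ω‖ ∂μ ≤
        ENNReal.ofReal (Ct * Ch *
          (1 + C * ∑ i ∈ Finset.range k, Real.exp (-lam * (i + 1)))) := by
    intro k
    induction k with
    | zero =>
      intro δ j hδ
      simpa using hbase j δ hδ
    | succ k IH =>
      intro δ j hδ
      have hY : StronglyMeasurable (v j X₀) := hv_meas j X₀ hX₀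
      have hmτ : ((↑(k * N + N) : ℝ)) * τ = (k : ℝ) + 1 := by
        rw [hτ]; push_cast; field_simp
      have huY : StronglyMeasurable (u ((δ:ℝ)*τ) (v j X₀)) := hu_meas _ (tnn δ) _ hY
      have hvY : StronglyMeasurable (v δ (v j X₀)) := hv_meas δ _ hY
      have hueq : u ((↑((k+1) * N + δ) : ℝ) * τ) (v j X₀) =
          u ((↑(k * N + N) : ℝ) * τ) (u ((δ:ℝ)*τ) (v j X₀)) := by
        have h1 : ((↑((k+1) * N + δ) : ℝ) * τ) = (↑(k * N + N) : ℝ) * τ + (δ:ℝ)*τ := by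
          push_cast; ring
        rw [h1, hu_comp ((δ:ℝ)*τ) ((↑(k * N + N) : ℝ)*τ) (tnn δ) (tnn (k*N+N)) _ hY]
      have hveq : v ((k+1) * N + δ) (v j X₀) = v (k * N + N) (v δ (v j X₀)) := by
        rw [show (k+1) * N + δ = (k * N + N) + δ by ring, hv_comp (k*N+N) δ _ hY]
      have hvδ : v δ (v j X₀) = v (δ + j) X₀ := (hv_comp δ j X₀ hX₀).symm
      have hAmeas : Measurable fun ω => ENNReal.ofReal
          ‖u ((↑(k * N + N) : ℝ) * τ) (u ((δ:ℝ)*τ) (v j X₀)) ω -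
            u ((↑(k * N + N) : ℝ) * τ) (v δ (v j X₀)) ω‖ :=
        (((hu_meas _ (tnn (k*N+N)) _ huY).sub
          (hu_meas _ (tnn (k*N+N)) _ hvY)).norm).measurable.ennreal_ofReal
      have hA : ∫⁻ ω, ENNReal.ofReal
          ‖u ((↑(k * N + N) : ℝ) * τ) (u ((δ:ℝ)*τ) (v j X₀)) ω -
            u ((↑(k * N + N) : ℝ) * τ) (v δ (v j X₀)) ω‖ ∂μ ≤
          ENNReal.ofReal (C * Real.exp (-lam * ((k:ℝ)+1)) * (Ct * Ch)) := by
        have hcnn : 0 ≤ C * Real.exp (-lam * ((↑(k * N + N) : ℝ) * τ)) :=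
          mul_nonneg hC (Real.exp_pos _).le
        calc ∫⁻ ω, ENNReal.ofReal
              ‖u ((↑(k * N + N) : ℝ) * τ) (u ((δ:ℝ)*τ) (v j X₀)) ω -
                u ((↑(k * N + N) : ℝ) * τ) (v δ (v j X₀)) ω‖ ∂μ
            ≤ ∫⁻ ω, ENNReal.ofReal (C * Real.exp (-lam * ((↑(k * N + N) : ℝ) * τ)) *
                ‖u ((δ:ℝ)*τ) (v j X₀) ω - v δ (v j X₀) ω‖) ∂μ := by
              refine lintegral_mono_ae ?_
              filter_upwards [hH1 (u ((δ:ℝ)*τ) (v j X₀)) (v δ (v j X₀)) huY hvY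
                ((↑(k * N + N) : ℝ) * τ) (tnn (k*N+N))] with ω hω
              exact ENNReal.ofReal_le_ofReal hω
          _ = ∫⁻ ω, ENNReal.ofReal (C * Real.exp (-lam * ((↑(k * N + N) : ℝ) * τ))) *
                ENNReal.ofReal ‖u ((δ:ℝ)*τ) (v j X₀) ω - v δ (v j X₀) ω‖ ∂μ := by
              refine lintegral_congr fun ω => ENNReal.ofReal_mul hcnn
          _ = ENNReal.ofReal (C * Real.exp (-lam * ((↑(k * N + N) : ℝ) * τ))) *
                ∫⁻ ω, ENNReal.ofReal ‖u ((δ:ℝ)*τ) (v j X₀) ω - v δ (v j X₀) ω‖ ∂μ :=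
              lintegral_const_mul' _ _ ENNReal.ofReal_ne_top
          _ ≤ ENNReal.ofReal (C * Real.exp (-lam * ((↑(k * N + N) : ℝ) * τ))) *
                ENNReal.ofReal (Ct * Ch) := by gcongr; exact hbase j δ hδ
          _ = ENNReal.ofReal (C * Real.exp (-lam * ((k:ℝ)+1)) * (Ct * Ch)) := by
              rw [hmτ, ← ENNReal.ofReal_mul (by rw [← hmτ]; exact hcnn)]
      have hB : ∫⁻ ω, ENNReal.ofReal
          ‖u ((↑(k * N + N) : ℝ) * τ) (v δ (v j X₀)) ω -
            v (k * N + N) (v δ (v j X₀)) ω‖ ∂μ ≤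
          ENNReal.ofReal (Ct * Ch *
            (1 + C * ∑ i ∈ Finset.range k, Real.exp (-lam * (i + 1)))) := by
        rw [hvδ]
        exact IH N (δ + j) le_rfl
      calc ∫⁻ ω, ENNReal.ofReal ‖u ((↑((k+1) * N + δ) : ℝ) * τ) (v j X₀) ω -
              v ((k+1) * N + δ) (v j X₀) ω‖ ∂μ
          = ∫⁻ ω, ENNReal.ofReal
              ‖u ((↑(k * N + N) : ℝ) * τ) (u ((δ:ℝ)*τ) (v j X₀)) ω -
                v (k * N + N) (v δ (v j X₀)) ω‖ ∂μ := by rw [hueq, hveq]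
        _ ≤ ∫⁻ ω, (ENNReal.ofReal
              ‖u ((↑(k * N + N) : ℝ) * τ) (u ((δ:ℝ)*τ) (v j X₀)) ω -
                u ((↑(k * N + N) : ℝ) * τ) (v δ (v j X₀)) ω‖
            + ENNReal.ofReal
              ‖u ((↑(k * N + N) : ℝ) * τ) (v δ (v j X₀)) ω -
                v (k * N + N) (v δ (v j X₀)) ω‖) ∂μ := by
            refine lintegral_mono fun ω => ?_
            refine le_trans (ENNReal.ofReal_le_ofReal ?_) ENNReal.ofReal_add_le
            have h := norm_add_le
              (u ((↑(k * N + N) : ℝ) * τ) (u ((δ:ℝ)*τ) (v j X₀)) ω -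
                u ((↑(k * N + N) : ℝ) * τ) (v δ (v j X₀)) ω)
              (u ((↑(k * N + N) : ℝ) * τ) (v δ (v j X₀)) ω -
                v (k * N + N) (v δ (v j X₀)) ω)
            simpa using h
        _ = (∫⁻ ω, ENNReal.ofReal
              ‖u ((↑(k * N + N) : ℝ) * τ) (u ((δ:ℝ)*τ) (v j X₀)) ω -
                u ((↑(k * N + N) : ℝ) * τ) (v δ (v j X₀)) ω‖ ∂μ)
            + ∫⁻ ω, ENNReal.ofReal
              ‖u ((↑(k * N + N) : ℝ) * τ) (v δ (v j X₀)) ω -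
                v (k * N + N) (v δ (v j X₀)) ω‖ ∂μ := lintegral_add_left hAmeas _
        _ ≤ ENNReal.ofReal (C * Real.exp (-lam * ((k:ℝ)+1)) * (Ct * Ch))
            + ENNReal.ofReal (Ct * Ch *
              (1 + C * ∑ i ∈ Finset.range k, Real.exp (-lam * (i + 1)))) :=
            add_le_add hA hB
        _ ≤ ENNReal.ofReal (Ct * Ch *
              (1 + C * ∑ i ∈ Finset.range (k+1), Real.exp (-lam * (i + 1)))) := by
            rw [← ENNReal.ofReal_add
              (mul_nonneg (mul_nonneg hC (Real.exp_pos _).le) hCtCh)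
              (mul_nonneg hCtCh (add_nonneg zero_le_one (mul_nonneg hC (Finset.sum_nonneg fun i _ => (Real.exp_pos _).le))))]
            exact ENNReal.ofReal_le_ofReal (le_of_eq (by rw [Finset.sum_range_succ]; ring))
  intro ℓ
  have h := key (ℓ / N) (ℓ % N) 0 (Nat.mod_lt ℓ hN).le
  rw [hv_zero X₀ hX₀, Nat.div_add_mod' ℓ N] at h
  refine h.trans (ENNReal.ofReal_le_ofReal ?_)
  have hSle : (∑ i ∈ Finset.range (ℓ / N), Real.exp (-lam * (i + 1))) ≤
      1 / (1 - Real.exp (-lam)) := by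
    calc (∑ i ∈ Finset.range (ℓ / N), Real.exp (-lam * (i + 1)))
        ≤ ∑ i ∈ Finset.range (ℓ / N), Real.exp (-lam) ^ i := by
          refine Finset.sum_le_sum fun i _ => ?_
          have h1 : Real.exp (-lam * ((i:ℝ) + 1)) = Real.exp (-lam) ^ (i+1) := by
            rw [← Real.exp_nat_mul]; congr 1; push_cast; ring
          rw [h1]
          exact pow_le_pow_of_le_one hr0.le hr1.le (Nat.le_succ i)
      _ ≤ ∑' i : ℕ, Real.exp (-lam) ^ i :=
          Summable.sum_le_tsum _ (fun i _ => (pow_pos hr0 i).le)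
            (summable_geometric_of_lt_one hr0.le hr1)
      _ = (1 - Real.exp (-lam))⁻¹ := tsum_geometric_of_lt_one hr0.le hr1
      _ = 1 / (1 - Real.exp (-lam)) := (one_div _).symm
  have hCS : C * (∑ i ∈ Finset.range (ℓ / N), Real.exp (-lam * (i + 1))) ≤
      C / (1 - Real.exp (-lam)) := by
    calc C * (∑ i ∈ Finset.range (ℓ / N), Real.exp (-lam * (i + 1)))
        ≤ C * (1 / (1 - Real.exp (-lam))) := mul_le_mul_of_nonneg_left hSle hC
      _ = C / (1 - Real.exp (-lam)) := by rw [mul_one_div]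
  exact mul_le_mul_of_nonneg_left (by linarith) hCtCh
end

section
/- Blowup of sequences satisfying the semi-implicit Euler moment recursion (analytic core of Lemma 5.1). Let C₀ ∈ (0,1], τ > 0 and b ≥ 0. Then there exists a₀ ≥ 1, depending only on C₀, τ, b, with the following property: whenever x, y : ℕ → ℝ are sequences with x_n ≥ 0 and y_n ≥ (x_n)² for all n, satisfying the recursion inequality x_{n+1} ≥ C₀·( x_n − 2τ·y_n + τ²·(y_n)^{3/2} + 2bτ ) for all n ∈ ℕ, and x₀ ≥ √(a₀), then x_n ≥ x₀ + n·τ for all n ∈ ℕ; in particular x_n → ∞ as n → ∞. -/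
open Filter

set_option maxHeartbeats 1000000

/-- Blowup of sequences satisfying the semi-implicit Euler moment recursion
(analytic core of Lemma 5.1). -/
theorem semi_implicit_euler_recursion_blowup
    (C₀ τ b : ℝ) (hC₀ : C₀ ∈ Set.Ioc (0 : ℝ) 1) (hτ : 0 < τ) (hb : 0 ≤ b) :
    ∃ a₀ : ℝ, 1 ≤ a₀ ∧
      ∀ x y : ℕ → ℝ,
        (∀ n, 0 ≤ x n) →
        (∀ n, (x n) ^ 2 ≤ y n) →
        (∀ n, C₀ * (x n - 2 * τ * y n + τ ^ 2 * (y n) ^ ((3 : ℝ) / 2) + 2 * b * τ) ≤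
          x (n + 1)) →
        Real.sqrt a₀ ≤ x 0 →
        (∀ n : ℕ, x 0 + n * τ ≤ x n) ∧ Tendsto x atTop atTop := by
  obtain ⟨hC0pos, hC01⟩ := hC₀
  have hτ2 : 0 < C₀ * τ ^ 2 := by positivity
  have hCτ : 0 < C₀ * τ := by positivity
  set M : ℝ := 6 / τ + 3 / (C₀ * τ ^ 2) + 3 / (C₀ * τ) + 1 with hMdef
  have h1 : 0 ≤ 6 / τ := by positivity
  have h2 : 0 ≤ 3 / (C₀ * τ ^ 2) := by positivity
  have h3 : 0 ≤ 3 / (C₀ * τ) := by positivity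
  have hM1 : 1 ≤ M := by simp only [hMdef]; linarith
  have hMnn : 0 ≤ M := by linarith
  refine ⟨M ^ 2, by nlinarith, ?_⟩
  intro x y hx hxy hrec hx0
  rw [Real.sqrt_sq hMnn] at hx0
  have main : ∀ n : ℕ, x 0 + n * τ ≤ x n := by
    intro n
    induction n with
    | zero => simp
    | succ n ih =>
      have hnτ : (0 : ℝ) ≤ n * τ := by positivity
      set t := x n with ht
      have htM : M ≤ t := by linarith
      have hy : t ^ 2 ≤ y n := hxy n
      have hy0 : 0 ≤ y n := le_trans (sq_nonneg t) hy
      set s := Real.sqrt (y n) with hs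
      have hs0 : 0 ≤ s := Real.sqrt_nonneg _
      have hsy : s ^ 2 = y n := Real.sq_sqrt hy0
      have hts : t ≤ s := by nlinarith [hx n]
      have hrpow : (y n) ^ ((3 : ℝ) / 2) = s ^ 3 := by
        have h12 : (y n) ^ ((1 : ℝ) / 2) = s := (Real.sqrt_eq_rpow (y n)).symm
        have : (y n) ^ ((3 : ℝ) / 2) = ((y n) ^ ((1 : ℝ) / 2)) ^ (3 : ℕ) := by
          rw [← Real.rpow_natCast ((y n) ^ ((1 : ℝ) / 2)) 3, ← Real.rpow_mul hy0]
          norm_num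
        rw [this, h12]
      -- basic size facts
      have h6 : 6 ≤ τ * t := by
        have : 6 / τ ≤ t := by simp only [hMdef] at htM; linarith
        rw [div_le_iff₀ hτ] at this; linarith
      have h3a : 3 ≤ C₀ * τ ^ 2 * t := by
        have : 3 / (C₀ * τ ^ 2) ≤ t := by simp only [hMdef] at htM; linarith
        rw [div_le_iff₀ hτ2] at this; linarith
      have h3b : 3 ≤ C₀ * τ * t := by
        have : 3 / (C₀ * τ) ≤ t := by simp only [hMdef] at htM; linarith
        rw [div_le_iff₀ hCτ] at this; linarith
      have ht1 : (1 : ℝ) ≤ t := by linarith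
      have hτs : 6 ≤ τ * s := by nlinarith
      have stepA : τ ^ 2 * t ^ 3 - 2 * τ * t ^ 2 ≤ τ ^ 2 * s ^ 3 - 2 * τ * s ^ 2 := by
        nlinarith [mul_nonneg (sub_nonneg.mpr hts) (sub_nonneg.mpr h6),
          mul_nonneg (sub_nonneg.mpr hts) (sub_nonneg.mpr hτs),
          mul_nonneg (mul_nonneg (sub_nonneg.mpr hts) (sub_nonneg.mpr hτs)) hs0,
          mul_nonneg (mul_nonneg (sub_nonneg.mpr hts) (sub_nonneg.mpr h6))
            (le_trans zero_le_one ht1)]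
      have ht0 : (0 : ℝ) < t := lt_of_lt_of_le one_pos ht1
      have f1 : (0 : ℝ) ≤ C₀ * (τ * t ^ 2) := by positivity
      have f2 : (0 : ℝ) ≤ t ^ 2 - t := by nlinarith
      have f3 : (0 : ℝ) ≤ τ * t ^ 2 - τ := by nlinarith
      have stepB : t + τ ≤ C₀ * (t + (τ ^ 2 * t ^ 3 - 2 * τ * t ^ 2)) := by
        nlinarith [mul_nonneg (sub_nonneg.mpr h6) f1,
          mul_nonneg (sub_nonneg.mpr h3a) f2,
          mul_nonneg (sub_nonneg.mpr h3b) f3]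
      have hrecn := hrec n
      rw [hrpow, ← hsy] at hrecn
      have hbτ : 0 ≤ C₀ * (2 * b * τ) := by positivity
      have hstep : t + τ ≤ x (n + 1) := by nlinarith [hrecn]
      push_cast
      linarith
  refine ⟨main, ?_⟩
  apply tendsto_atTop_mono main
  apply tendsto_atTop_add_const_left
  exact Tendsto.atTop_mul_const hτ tendsto_natCast_atTop_atTop
end

section
/- Finite-time blowup of the semi-implicit Euler iteration, conditional probabilistic form (Lemma 5.1). Let (Ω,𝓕,P) be a probability space, let I = (0,1) with Lebesgue measure, let τ > 0, q ≥ 0, C₀ ∈ (0,1], and let Φ : L²(I) → L²(I) be a linear map satisfying ‖Φ v‖²_{L²} ≥ C₀·‖v‖²_{L²} for all v ∈ L²(I). Let (u_n)_{n∈ℕ} and (w_n)_{n≥1} be sequences of measurable maps from Ω into functions on I such that: for each n, almost surely u_n(ω) ∈ L⁶(I) and w_{n+1}(ω) ∈ L²(I); the expectations E‖u_n‖²_{L²}, E‖u_n‖⁴_{L⁴}, E‖u_n‖⁶_{L⁶}, E‖w_{n+1}‖²_{L²} are finite; E[⟨u_n − τ·u_n³, w_{n+1}⟩_{L²}] = 0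 and E‖w_{n+1}‖²_{L²} = 2qτ for each n (where u_n³ is the pointwise cube); and almost surely u_{n+1} = Φ( u_n − τ·u_n³ + w_{n+1} ) in L²(I). Then there exists a constant a₀ ≥ 1, depending only on C₀, τ, q, such that if E‖u₀‖²_{L²} ≥ √(a₀), then E‖u_n‖²_{L²} ≥ E‖u₀‖²_{L²} + n·τ for all n ∈ ℕ, so E‖u_n‖²_{L²} → ∞ as n → ∞. -/
/-!
Pointwise, `(a - τ a³ + b)² ≥ τ² a⁶ / 4 - a² / 2 - b²`. Integrating, applying the lower bound on
`Φ`, and using Jensen's inequality `(E ‖u‖²)³ ≤ E (‖u‖²)³ ≤ E ‖u‖⁶₆` turns the scheme into the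
scalar recursion `X (n+1) ≥ C₀ (τ² X n ³ / 4 - X n / 2 - 2 q τ)` for `X n = E ‖u n‖²`. Once `X n`
exceeds an explicit threshold the cubic term dominates, so `X` gains at least `τ` per step and
never drops back below the threshold.
-/

open MeasureTheory Filter

lemma MeasureTheory.MemLp.integrable_pow_of_even {α : Type*} [MeasurableSpace α] {μ : Measure α}
    {f : α → ℝ} {p : ℕ} (hf : MemLp f p μ) (hp : Even p) (hp₀ : p ≠ 0) :
    Integrable (fun x => f x ^ p) μ :=
  (hf.integrable_norm_pow hp₀).congr (ae_of_all _ fun x => by simp [hp.pow_abs])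

lemma MeasureTheory.MemLp.integrable_pow_six {α : Type*} [MeasurableSpace α] {μ : Measure α}
    {f : α → ℝ} (hf : MemLp f 6 μ) : Integrable (fun x => f x ^ 6) μ :=
  MemLp.integrable_pow_of_even (p := 6) (by exact_mod_cast hf) (by decide) (by norm_num)

lemma pow_integral_le_integral_of_pow_le {α : Type*} [MeasurableSpace α] {μ : Measure α}
    [IsProbabilityMeasure μ] {Y Z : α → ℝ} (n : ℕ) (hY₀ : ∀ᵐ x ∂μ, 0 ≤ Y x)
    (hY : Integrable Y μ) (hZ : Integrable Z μ) (hYZ : ∀ᵐ x ∂μ, Y x ^ n ≤ Z x) :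
    (∫ x, Y x ∂μ) ^ n ≤ ∫ x, Z x ∂μ := by
  have hYn : Integrable (fun x => Y x ^ n) μ := by
    refine hZ.mono' (hY.aestronglyMeasurable.pow n) ?_
    filter_upwards [hY₀, hYZ] with x hx hxZ
    rwa [Real.norm_eq_abs, abs_of_nonneg (pow_nonneg hx n)]
  calc (∫ x, Y x ∂μ) ^ n ≤ ∫ x, Y x ^ n ∂μ :=
        (convexOn_pow n).map_integral_le (continuous_pow n).continuousOn isClosed_Ici hY₀ hY hYn
    _ ≤ ∫ x, Z x ∂μ := integral_mono_ae hYn hZ hYZ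

lemma half_sq_sub_sq_le_sq_add (x y : ℝ) : x ^ 2 / 2 - y ^ 2 ≤ (x + y) ^ 2 := by
  nlinarith [sq_nonneg (x + 2 * y)]

lemma sq_explicit_step_ge (τ a b : ℝ) :
    τ ^ 2 / 4 * a ^ 6 - a ^ 2 / 2 - b ^ 2 ≤ (a - τ * a ^ 3 + b) ^ 2 := by
  have h := half_sq_sub_sq_le_sq_add (τ * a ^ 3) (-a)
  have h' := half_sq_sub_sq_le_sq_add (a - τ * a ^ 3) b
  nlinarith

section ExplicitStep

variable {α : Type*} [MeasurableSpace α] {μ : Measure α}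

lemma MeasureTheory.MemLp.explicit_step [IsFiniteMeasure μ] {f g : α → ℝ} (hf : MemLp f 6 μ)
    (τ : ℝ) (hg : MemLp g 2 μ) :
    MemLp (fun x => f x - τ * f x ^ 3 + g x) 2 μ := by
  have hf3 : MemLp (fun x => f x ^ 3) 2 μ :=
    (memLp_two_iff_integrable_sq (hf.aestronglyMeasurable.pow 3)).2 <|
      hf.integrable_pow_six.congr (ae_of_all _ fun x => by simp only [Pi.pow_apply]; ring)
  exact ((hf.mono_exponent (by norm_num)).sub (hf3.const_mul τ)).add hg

lemma integral_sq_pow_three_le_integral_pow_six [IsProbabilityMeasure μ] {f : α → ℝ}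
    (hf : MemLp f 6 μ) : (∫ x, f x ^ 2 ∂μ) ^ 3 ≤ ∫ x, f x ^ 6 ∂μ :=
  pow_integral_le_integral_of_pow_le 3 (ae_of_all _ fun x => sq_nonneg (f x))
    (hf.mono_exponent (by norm_num)).integrable_sq hf.integrable_pow_six
    (ae_of_all _ fun x => (pow_mul (f x) 2 3).symm.le)

lemma integral_sq_explicit_step_ge [IsFiniteMeasure μ] {f g : α → ℝ} (τ : ℝ) (hf : MemLp f 6 μ)
    (hg : MemLp g 2 μ) :
    τ ^ 2 / 4 * ∫ x, f x ^ 6 ∂μ - (∫ x, f x ^ 2 ∂μ) / 2 - ∫ x, g x ^ 2 ∂μ ≤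
      ∫ x, (f x - τ * f x ^ 3 + g x) ^ 2 ∂μ := by
  have hf2 : MemLp f 2 μ := hf.mono_exponent (by norm_num)
  have hf6 := hf.integrable_pow_six
  have hf2sq := hf2.integrable_sq
  have hg2 := hg.integrable_sq
  have hlow : Integrable (fun x => τ ^ 2 / 4 * f x ^ 6 - f x ^ 2 / 2) μ :=
    (hf6.const_mul _).sub (hf2sq.div_const _)
  calc τ ^ 2 / 4 * ∫ x, f x ^ 6 ∂μ - (∫ x, f x ^ 2 ∂μ) / 2 - ∫ x, g x ^ 2 ∂μ
      = ∫ x, (τ ^ 2 / 4 * f x ^ 6 - f x ^ 2 / 2 - g x ^ 2) ∂μ := by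
        rw [integral_sub hlow hg2, integral_sub (hf6.const_mul _) (hf2sq.div_const _),
          integral_const_mul, integral_div]
    _ ≤ ∫ x, (f x - τ * f x ^ 3 + g x) ^ 2 ∂μ :=
        integral_mono (hlow.sub hg2) (hf.explicit_step τ hg).integrable_sq
          fun x => sq_explicit_step_ge τ (f x) (g x)

lemma integral_energy_step_ge {Ω : Type*} [MeasurableSpace Ω] {P : Measure Ω}
    [IsProbabilityMeasure P] [IsProbabilityMeasure μ] {τ C₀ : ℝ} (hC₀ : 0 ≤ C₀)
    {Φ : (α → ℝ) → (α → ℝ)}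
    (hΦ : ∀ v, MemLp v 2 μ → C₀ * ∫ x, v x ^ 2 ∂μ ≤ ∫ x, Φ v x ^ 2 ∂μ)
    {u u' w : Ω → α → ℝ} (hu : ∀ᵐ ω ∂P, MemLp (u ω) 6 μ) (hw : ∀ᵐ ω ∂P, MemLp (w ω) 2 μ)
    (hu2 : Integrable (fun ω => ∫ x, u ω x ^ 2 ∂μ) P)
    (hu6 : Integrable (fun ω => ∫ x, u ω x ^ 6 ∂μ) P)
    (hw2 : Integrable (fun ω => ∫ x, w ω x ^ 2 ∂μ) P)
    (hu'2 : Integrable (fun ω => ∫ x, u' ω x ^ 2 ∂μ) P)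
    (hstep : ∀ᵐ ω ∂P, u' ω =ᵐ[μ] Φ (fun x => u ω x - τ * u ω x ^ 3 + w ω x)) :
    C₀ * (τ ^ 2 / 4 * (∫ ω, ∫ x, u ω x ^ 2 ∂μ ∂P) ^ 3 - (∫ ω, ∫ x, u ω x ^ 2 ∂μ ∂P) / 2
      - ∫ ω, ∫ x, w ω x ^ 2 ∂μ ∂P) ≤ ∫ ω, ∫ x, u' ω x ^ 2 ∂μ ∂P := by
  have hpath : ∀ᵐ ω ∂P, C₀ * (τ ^ 2 / 4 * ∫ x, u ω x ^ 6 ∂μ - (∫ x, u ω x ^ 2 ∂μ) / 2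
      - ∫ x, w ω x ^ 2 ∂μ) ≤ ∫ x, u' ω x ^ 2 ∂μ := by
    filter_upwards [hu, hw, hstep] with ω huω hwω hstepω
    calc _ ≤ C₀ * ∫ x, (u ω x - τ * u ω x ^ 3 + w ω x) ^ 2 ∂μ :=
          mul_le_mul_of_nonneg_left (integral_sq_explicit_step_ge τ huω hwω) hC₀
      _ ≤ _ := hΦ _ (huω.explicit_step τ hwω)
      _ = _ := integral_congr_ae (hstepω.mono fun x hx => by rw [hx])
  have hjensen : (∫ ω, ∫ x, u ω x ^ 2 ∂μ ∂P) ^ 3 ≤ ∫ ω, ∫ x, u ω x ^ 6 ∂μ ∂P :=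
    pow_integral_le_integral_of_pow_le 3
      (ae_of_all _ fun ω => integral_nonneg fun x => sq_nonneg (u ω x)) hu2 hu6
      (hu.mono fun ω huω => integral_sq_pow_three_le_integral_pow_six huω)
  have hlow :
      Integrable (fun ω => τ ^ 2 / 4 * ∫ x, u ω x ^ 6 ∂μ - (∫ x, u ω x ^ 2 ∂μ) / 2) P :=
    (hu6.const_mul _).sub (hu2.div_const 2)
  calc _ ≤ C₀ * (τ ^ 2 / 4 * (∫ ω, ∫ x, u ω x ^ 6 ∂μ ∂P) - (∫ ω, ∫ x, u ω x ^ 2 ∂μ ∂P) / 2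
        - ∫ ω, ∫ x, w ω x ^ 2 ∂μ ∂P) := by gcongr
    _ = ∫ ω, C₀ * (τ ^ 2 / 4 * ∫ x, u ω x ^ 6 ∂μ - (∫ x, u ω x ^ 2 ∂μ) / 2
        - ∫ x, w ω x ^ 2 ∂μ) ∂P := by
      rw [integral_const_mul, integral_sub hlow hw2,
        integral_sub (hu6.const_mul _) (hu2.div_const 2), integral_const_mul, integral_div]
    _ ≤ _ := integral_mono_ae ((hlow.sub hw2).const_mul C₀) hu'2 hpath

end ExplicitStep

lemma add_mul_le_of_cubic_lower_bound {X : ℕ → ℝ} {A B c τ : ℝ} (hA : 0 < A) (hB : 0 ≤ B)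
    (hc : 0 ≤ c) (hτ : 0 ≤ τ) (hX : ∀ n, A * X n ^ 3 - B * X n - c ≤ X (n + 1))
    (h0 : 1 + (B + 1 + c + τ) / A ≤ X 0) (n : ℕ) : X 0 + n * τ ≤ X n := by
  have hgain : ∀ x, 1 + (B + 1 + c + τ) / A ≤ x → x + τ ≤ A * x ^ 3 - B * x - c := by
    intro x hx
    have hx1 : 1 ≤ x := le_trans (le_add_of_nonneg_right (by positivity)) hx
    have hAx : B + 1 + c + τ ≤ A * x := by
      rw [← div_le_iff₀' hA]; linarith
    -- `A x³ = (A x) x² ≥ (B + 1) x² + (c + τ) x²`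
    nlinarith [mul_le_mul_of_nonneg_right hAx (sq_nonneg x),
      mul_nonneg (by linarith : 0 ≤ B + 1) (by nlinarith : 0 ≤ x ^ 2 - x),
      mul_nonneg (by linarith : 0 ≤ c + τ) (by nlinarith : 0 ≤ x ^ 2 - 1)]
  induction n with
  | zero => simp
  | succ n ih =>
    have := hgain (X n) (by nlinarith [mul_nonneg (Nat.cast_nonneg n : (0 : ℝ) ≤ n) hτ])
    push_cast
    linarith [hX n]

/-- Finite-time blowup of the semi-implicit Euler iteration, conditional
probabilistic form (Lemma 5.1).  Here `I = (0,1)` carries Lebesgue measure,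
states are real-valued functions on the line (thought of as functions on `I`,
all norms being computed over `I`), `Φ` plays the role of the resolvent
`(I - τΔ_h)⁻¹` and `w (n+1)` of the scaled noise increment `√2 δW^{n+1}`. -/
theorem semi_implicit_euler_finite_time_blowup
    {Ω : Type*} [MeasurableSpace Ω] (P : Measure Ω) [IsProbabilityMeasure P]
    (τ q C₀ : ℝ) (hτ : 0 < τ) (hq : 0 ≤ q) (hC₀ : C₀ ∈ Set.Ioc (0 : ℝ) 1) :
    ∃ a₀ : ℝ, 1 ≤ a₀ ∧
      -- `a₀` depends only on `C₀`, `τ`, `q`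
      ∀ (Φ : (ℝ → ℝ) →ₗ[ℝ] (ℝ → ℝ)),
        -- lower bound `‖Φ v‖² ≥ C₀ ‖v‖²` on L²(I)
        (∀ v : ℝ → ℝ, MemLp v 2 (volume.restrict (Set.Ioo (0 : ℝ) 1)) →
          C₀ * ∫ x in Set.Ioo (0 : ℝ) 1, (v x) ^ 2 ≤
            ∫ x in Set.Ioo (0 : ℝ) 1, (Φ v x) ^ 2) →
        ∀ u w : ℕ → Ω → ℝ → ℝ,
          -- almost surely u_n(ω) ∈ L⁶(I), w_{n+1}(ω) ∈ L²(I)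
          (∀ n, ∀ᵐ ω ∂P, MemLp (u n ω) 6 (volume.restrict (Set.Ioo (0 : ℝ) 1))) →
          (∀ n, ∀ᵐ ω ∂P, MemLp (w (n + 1) ω) 2 (volume.restrict (Set.Ioo (0 : ℝ) 1))) →
          -- finiteness of the expectations E‖u_n‖²_{L²}, E‖u_n‖⁴_{L⁴},
          -- E‖u_n‖⁶_{L⁶} and E‖w_{n+1}‖²_{L²}
          (∀ n, Integrable (fun ω => ∫ x in Set.Ioo (0 : ℝ) 1, (u n ω x) ^ 2) P) →
          (∀ n, Integrable (fun ω => ∫ x in Set.Ioo (0 : ℝ) 1, (u n ω x) ^ 4) P) →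
          (∀ n, Integrable (fun ω => ∫ x in Set.Ioo (0 : ℝ) 1, (u n ω x) ^ 6) P) →
          (∀ n, Integrable (fun ω => ∫ x in Set.Ioo (0 : ℝ) 1, (w (n + 1) ω x) ^ 2) P) →
          -- E⟨u_n − τ u_n³, w_{n+1}⟩ = 0
          (∀ n, ∫ ω, (∫ x in Set.Ioo (0 : ℝ) 1,
              (u n ω x - τ * (u n ω x) ^ 3) * w (n + 1) ω x) ∂P = 0) →
          -- E‖w_{n+1}‖²_{L²} = 2qτ
          (∀ n, ∫ ω, (∫ x in Set.Ioo (0 : ℝ) 1, (w (n + 1) ω x) ^ 2) ∂P = 2 * q * τ) →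
          -- almost surely u_{n+1} = Φ(u_n − τ u_n³ + w_{n+1}) in L²(I)
          (∀ n, ∀ᵐ ω ∂P,
            u (n + 1) ω =ᵐ[volume.restrict (Set.Ioo (0 : ℝ) 1)]
              Φ (fun x => u n ω x - τ * (u n ω x) ^ 3 + w (n + 1) ω x)) →
          -- conclusion: blowup of the second moment for large data
          Real.sqrt a₀ ≤ ∫ ω, (∫ x in Set.Ioo (0 : ℝ) 1, (u 0 ω x) ^ 2) ∂P →
            (∀ n : ℕ,
              (∫ ω, (∫ x in Set.Ioo (0 : ℝ) 1, (u 0 ω x) ^ 2) ∂P) + n * τ ≤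
                ∫ ω, (∫ x in Set.Ioo (0 : ℝ) 1, (u n ω x) ^ 2) ∂P) ∧
            Tendsto (fun n : ℕ => ∫ ω, (∫ x in Set.Ioo (0 : ℝ) 1, (u n ω x) ^ 2) ∂P)
              atTop atTop := by
  obtain ⟨hC₀, -⟩ := hC₀
  set μ : Measure ℝ := volume.restrict (Set.Ioo (0 : ℝ) 1)
  have : IsProbabilityMeasure μ := ⟨by simp [μ]⟩
  set A := C₀ * τ ^ 2 / 4
  set s := 1 + (C₀ / 2 + 1 + 2 * C₀ * q * τ + τ) / A
  have hs : 1 ≤ s := le_add_of_nonneg_right (by positivity)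
  refine ⟨s ^ 2, one_le_pow₀ hs, ?_⟩
  intro Φ hΦ u w hu6 hw2 hInt2 _ hInt6 hIntw _ hwvar hscheme h0
  rw [Real.sqrt_sq (by positivity)] at h0
  set X : ℕ → ℝ := fun n => ∫ ω, ∫ x, u n ω x ^ 2 ∂μ ∂P
  have hX : ∀ n, A * X n ^ 3 - C₀ / 2 * X n - 2 * C₀ * q * τ ≤ X (n + 1) := by
    intro n
    have := integral_energy_step_ge hC₀.le hΦ (hu6 n) (hw2 n) (hInt2 n) (hInt6 n) (hIntw n)
      (hInt2 (n + 1)) (hscheme n)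
    rw [hwvar n] at this
    linear_combination this
  have hlin := add_mul_le_of_cubic_lower_bound (by positivity) (by positivity) (by positivity)
    hτ.le hX h0
  exact ⟨hlin, tendsto_atTop_mono hlin <| tendsto_atTop_add_const_left _ _ <|
    tendsto_natCast_atTop_atTop.atTop_mul_const hτ⟩
end
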